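/- arXiv:2412.09555 — 5 statements merged into one kernel-verified Lean document; each statement's English description precedes it below -/
import Mathlib

section
/- Let H be a Hilbert space, L : H → H a linear, invertible, self-adjoint bounded operator, and f(x) = (1/2)⟨Lx, x⟩ + b(x) where b is C^1 with compact gradient map ∇b : H → H. Then f satisfies the Palais–Smale condition: every sequence (x_n) with f(x_n) convergent and ∇f(x_n) → 0 has a convergent subsequence. -/
open scoped InnerProductSpace
open Filter

noncomputable section

/-- Let `H` be a Hilbert space, `L : H → H` bounded linear, invertible and
self-adjoint, and `f(x) = (1/2)⟨Lx,x⟩ + b(x)` with `b` of class `C^1` and compact gradient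
`g = ∇b`.  Assuming (as in the quoted lemma) that every Palais–Smale sequence is bounded,
`f` satisfies the Palais–Smale condition: every sequence `(x_n)` with `f(x_n)` convergent
and `∇f(x_n) = L x_n + g(x_n) → 0` has a convergent subsequence. -/
theorem stmt_4 {H : Type*} [NormedAddCommGroup H] [InnerProductSpace ℝ H] [CompleteSpace H]
    (L : H →L[ℝ] H) (hL_sa : ∀ x y : H, ⟪L x, y⟫_ℝ = ⟪x, L y⟫_ℝ)
    (hL_inv : Function.Bijective L)
    (b : H → ℝ) (g : H → H) (hb : ∀ x, HasGradientAt b (g x) x)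
    (hg_cont : Continuous g)
    (hg_compact : ∀ s : Set H, Bornology.IsBounded s → IsCompact (closure (g '' s)))
    (f : H → ℝ) (hf : ∀ x, f x = 1 / 2 * ⟪L x, x⟫_ℝ + b x)
    (hPS_bounded : ∀ u : ℕ → H,
      (∃ c : ℝ, Tendsto (fun m => f (u m)) atTop (nhds c)) →
      Tendsto (fun m => L (u m) + g (u m)) atTop (nhds 0) →
      Bornology.IsBounded (Set.range u)) :
    ∀ u : ℕ → H,
      (∃ c : ℝ, Tendsto (fun m => f (u m)) atTop (nhds c)) →
      Tendsto (fun m => L (u m) + g (u m)) atTop (nhds 0) →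
      ∃ (φ : ℕ → ℕ) (x : H), StrictMono φ ∧ Tendsto (fun m => u (φ m)) atTop (nhds x) := by
  intro u hfc hgr
  have hbd : Bornology.IsBounded (Set.range u) := hPS_bounded u hfc hgr
  -- compact set containing g (u n)
  have hK : IsCompact (closure (g '' Set.range u)) := hg_compact _ hbd
  have hmem : ∀ n, g (u n) ∈ closure (g '' Set.range u) := fun n =>
    subset_closure ⟨u n, ⟨n, rfl⟩, rfl⟩
  obtain ⟨y, -, φ, hφ, hy⟩ := hK.tendsto_subseq hmem
  -- continuous inverse of L
  let E := ContinuousLinearEquiv.ofBijective L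
    (LinearMap.ker_eq_bot_of_injective hL_inv.1)
    (LinearMap.range_eq_top.mpr hL_inv.2)
  have hgr' : Tendsto (fun m => L (u (φ m)) + g (u (φ m))) atTop (nhds 0) :=
    hgr.comp hφ.tendsto_atTop
  have hLu : Tendsto (fun m => L (u (φ m))) atTop (nhds (-y)) := by
    have := hgr'.sub hy
    simpa using this
  refine ⟨φ, E.symm (-y), hφ, ?_⟩
  have := (E.symm.continuous.tendsto (-y)).comp hLu
  have heq : ∀ m, E.symm (L (u (φ m))) = u (φ m) := fun m =>
    E.symm_apply_apply (u (φ m))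
  simpa [Function.comp_def, heq] using this
end
end

section
/- A bounded linear operator A : H_1 → H_2 between Hilbert spaces is Fredholm if and only if the pair (H_1 × {0}, Graph(A)) is a Fredholm pair of closed subspaces in H_1 × H_2. -/
noncomputable section

/-- Closed subspaces `V, W` of a (normed) space form a Fredholm pair if `V ∩ W` is
finite dimensional, `V + W` is closed, and `V + W` has finite codimension. -/
def IsFredholmPair {E : Type*} [NormedAddCommGroup E] [NormedSpace ℝ E]
    (V W : Submodule ℝ E) : Prop :=
  FiniteDimensional ℝ ↥(V ⊓ W) ∧ IsClosed ((V ⊔ W : Submodule ℝ E) : Set E) ∧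
    FiniteDimensional ℝ (E ⧸ (V ⊔ W))

/-! Both conditions are read off the same three facts: `(H₁ × 0) ∩ Graph(A) = ker A × 0`,
`(H₁ × 0) + Graph(A) = H₁ × range A`, and `H₁ × range A` is closed, resp. of finite codimension,
exactly when `range A` is. -/

namespace Submodule

variable {R M N : Type*} [Ring R] [AddCommGroup M] [Module R M] [AddCommGroup N] [Module R N]

theorem prod_top_bot_inf_graph (f : M →ₗ[R] N) :
    (⊤ : Submodule R M).prod ⊥ ⊓ f.graph = (LinearMap.ker f).map (LinearMap.inl R M N) := by
  ext ⟨x, y⟩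
  simp only [mem_inf, mem_prod, mem_top, mem_bot, true_and, LinearMap.mem_graph_iff, mem_map,
    LinearMap.mem_ker, LinearMap.inl_apply, Prod.mk.injEq]
  constructor
  · rintro ⟨rfl, hx⟩
    exact ⟨x, hx.symm, rfl, rfl⟩
  · rintro ⟨x, hx, rfl, rfl⟩
    exact ⟨rfl, hx.symm⟩

theorem prod_top_bot_sup_graph (f : M →ₗ[R] N) :
    (⊤ : Submodule R M).prod ⊥ ⊔ f.graph = (⊤ : Submodule R M).prod (LinearMap.range f) := by
  refine le_antisymm (sup_le ?_ ?_) ?_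
  · exact prod_mono le_rfl bot_le
  · rintro ⟨x, y⟩ hxy
    exact ⟨trivial, x, ((LinearMap.mem_graph_iff _ _).1 hxy).symm⟩
  · rintro ⟨x, _⟩ ⟨-, z, rfl⟩
    -- `(x, f z) = (x - z, 0) + (z, f z)`
    refine mem_sup.2 ⟨(x - z, 0), ⟨trivial, rfl⟩, (z, f z), rfl, ?_⟩
    simp

def quotientTopProdEquiv (p : Submodule R N) :
    ((M × N) ⧸ (⊤ : Submodule R M).prod p) ≃ₗ[R] N ⧸ p :=
  have hker : LinearMap.ker (p.mkQ ∘ₗ LinearMap.snd R M N) = (⊤ : Submodule R M).prod p := by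
    rw [LinearMap.ker_comp, ker_mkQ, comap_snd]
  (quotEquivOfEq _ _ hker.symm).trans <|
    (p.mkQ ∘ₗ LinearMap.snd R M N).quotKerEquivOfSurjective <|
      p.mkQ_surjective.comp LinearMap.snd_surjective

theorem isClosed_coe_top_prod_iff [TopologicalSpace M] [TopologicalSpace N] (p : Submodule R N) :
    IsClosed (((⊤ : Submodule R M).prod p : Submodule R (M × N)) : Set (M × N)) ↔
      IsClosed (p : Set N) := by
  rw [← comap_snd]
  exact isOpenQuotientMap_snd.isQuotientMap.isCoinducing.isClosed_preimage

end Submodule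

theorem stmt_7_general {H₁ H₂ : Type*}
    [NormedAddCommGroup H₁] [InnerProductSpace ℝ H₁]
    [NormedAddCommGroup H₂] [InnerProductSpace ℝ H₂]
    (A : H₁ →L[ℝ] H₂) :
    (FiniteDimensional ℝ (LinearMap.ker (A : H₁ →ₗ[ℝ] H₂)) ∧
      IsClosed ((LinearMap.range (A : H₁ →ₗ[ℝ] H₂) : Submodule ℝ H₂) : Set H₂) ∧
      FiniteDimensional ℝ (H₂ ⧸ LinearMap.range (A : H₁ →ₗ[ℝ] H₂))) ↔
    IsFredholmPair ((⊤ : Submodule ℝ H₁).prod (⊥ : Submodule ℝ H₂))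
      (LinearMap.graph (A : H₁ →ₗ[ℝ] H₂)) := by
  rw [IsFredholmPair, Submodule.prod_top_bot_inf_graph, Submodule.prod_top_bot_sup_graph,
    Submodule.isClosed_coe_top_prod_iff]
  exact and_congr
    (Module.Finite.equiv_iff (Submodule.equivMapOfInjective _ LinearMap.inl_injective _))
    (and_congr Iff.rfl (Module.Finite.equiv_iff (Submodule.quotientTopProdEquiv _).symm))

/-- A bounded linear operator `A : H₁ → H₂` between Hilbert spaces is Fredholm
(finite-dimensional kernel, closed range, finite-dimensional cokernel) if and only if the
pair `(H₁ × {0}, Graph(A))` is a Fredholm pair of closed subspaces of `H₁ × H₂`. -/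
theorem stmt_7 {H₁ H₂ : Type*}
    [NormedAddCommGroup H₁] [InnerProductSpace ℝ H₁] [CompleteSpace H₁]
    [NormedAddCommGroup H₂] [InnerProductSpace ℝ H₂] [CompleteSpace H₂]
    (A : H₁ →L[ℝ] H₂) :
    (FiniteDimensional ℝ (LinearMap.ker (A : H₁ →ₗ[ℝ] H₂)) ∧
      IsClosed ((LinearMap.range (A : H₁ →ₗ[ℝ] H₂) : Submodule ℝ H₂) : Set H₂) ∧
      FiniteDimensional ℝ (H₂ ⧸ LinearMap.range (A : H₁ →ₗ[ℝ] H₂))) ↔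
    IsFredholmPair ((⊤ : Submodule ℝ H₁).prod (⊥ : Submodule ℝ H₂))
      (LinearMap.graph (A : H₁ →ₗ[ℝ] H₂)) :=
  stmt_7_general A
end
end

section
/- Let V, W be closed subspaces of a Hilbert space H such that W is a compact perturbation of V (i.e. P_W − P_V is compact). Then (V, W^⊥) is a Fredholm pair, so the relative dimension dim(V, W) := dim(V ∩ W^⊥) − dim(V^⊥ ∩ W) is a well-defined integer. -/
/-!
Put `K = P_W - P_V`, a compact self-adjoint operator. It acts as `-1` on `V ∩ W^⊥` and as `1` on
`V^⊥ ∩ W`, so both intersections lie in eigenspaces of `K` for nonzero eigenvalues and are finite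
dimensional. Moreover `x - K x = P_V x + (x - P_W x)`, so `V + W^⊥` contains the range of `1 - K`.
By the Fredholm alternative applied to `K` restricted to the orthogonal complement of its
`1`-eigenspace, this range contains that orthogonal complement, which is closed and of finite
codimension; and any subspace containing a closed subspace of finite codimension is again closed
and of finite codimension.
-/

noncomputable section

open Module End

section OrthogonalProjection

variable {𝕜 E : Type*} [RCLike 𝕜] [NormedAddCommGroup E] [InnerProductSpace 𝕜 E]

def LinearMap.IsOrthogonalProjectionOnto (P : E →ₗ[𝕜] E) (V : Submodule 𝕜 E) : Prop :=
  ∀ x, P x ∈ V ∧ x - P x ∈ Vᗮ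

namespace LinearMap.IsOrthogonalProjectionOnto

variable {P : E →ₗ[𝕜] E} {V : Submodule 𝕜 E} {x : E}

theorem apply_of_mem (hP : P.IsOrthogonalProjectionOnto V) (hx : x ∈ V) : P x = x :=
  (sub_eq_zero.mp (V.orthogonal_disjoint.le_bot ⟨V.sub_mem hx (hP x).1, (hP x).2⟩)).symm

theorem apply_of_mem_orthogonal (hP : P.IsOrthogonalProjectionOnto V) (hx : x ∈ Vᗮ) :
    P x = 0 := by
  have hPx : P x ∈ Vᗮ := by simpa using Vᗮ.sub_mem hx (hP x).2
  exact V.orthogonal_disjoint.le_bot ⟨(hP x).1, hPx⟩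

theorem isSymmetric (hP : P.IsOrthogonalProjectionOnto V) : P.IsSymmetric := fun x y =>
  calc inner 𝕜 (P x) y = inner 𝕜 (P x) (P y + (y - P y)) := by rw [add_sub_cancel]
    _ = inner 𝕜 (P x) (P y) := by
      rw [inner_add_right, V.inner_right_of_mem_orthogonal (hP x).1 (hP y).2, add_zero]
    _ = inner 𝕜 (P x + (x - P x)) (P y) := by
      rw [inner_add_left, V.inner_left_of_mem_orthogonal (hP y).1 (hP x).2, add_zero]
    _ = inner 𝕜 x (P y) := by rw [add_sub_cancel]

end LinearMap.IsOrthogonalProjectionOnto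

theorem Submodule.finiteDimensional_quotient_orthogonal (K : Submodule 𝕜 E)
    [FiniteDimensional 𝕜 K] : FiniteDimensional 𝕜 (E ⧸ Kᗮ) :=
  .equiv (Kᗮ.quotientEquivOfIsCompl K K.isCompl_orthogonal.symm).symm

end OrthogonalProjection

theorem ContinuousLinearMap.orthogonal_eigenspace_le_range_sub_smul {𝕜 E : Type*} [RCLike 𝕜]
    [NormedAddCommGroup E] [InnerProductSpace 𝕜 E] [CompleteSpace E] {T : E →L[𝕜] E}
    (hT : IsCompactOperator T) (hT' : (T : E →ₗ[𝕜] E).IsSymmetric) {μ : 𝕜} (hμ : μ ≠ 0) :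
    (eigenspace (T : End 𝕜 E) μ)ᗮ ≤ LinearMap.range ((T - μ • 1 : E →L[𝕜] E) : E →ₗ[𝕜] E) := by
  set N := (eigenspace (T : End 𝕜 E) μ)ᗮ
  have hN : ∀ v ∈ N, T v ∈ N := hT'.invariant_orthogonalComplement_eigenspace μ
  have hS : IsCompactOperator (T.restrict hN) := hT.restrict' hN
  have hSμ : ¬ HasEigenvalue ((T.restrict hN : N →L[𝕜] N) : End 𝕜 N) μ := by
    rw [hasEigenvalue_iff, not_not, toLinearMap_restrict]
    exact eigenspace_restrict_eq_bot hN (Submodule.orthogonal_disjoint _)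
  have hbij := (hS.hasEigenvalue_or_mem_resolventSet hμ).resolve_left hSμ
  rw [spectrum.mem_resolventSet_iff, ContinuousLinearMap.isUnit_iff_bijective] at hbij
  intro y hy
  obtain ⟨x, hx⟩ := hbij.2 ⟨y, hy⟩
  have hx' : μ • (x : E) - T x = y := by simpa using congrArg Subtype.val hx
  refine ⟨-(x : E), ?_⟩
  rw [← hx']
  simp only [toLinearMap_sub, toLinearMap_smul, toLinearMap_one, LinearMap.sub_apply,
    coe_coe, map_neg, LinearMap.smul_apply, End.one_apply]
  abel

theorem stmt_8_general {H : Type*} [NormedAddCommGroup H] [InnerProductSpace ℝ H] [CompleteSpace H]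
    (V W : Submodule ℝ H)
    (PV PW : H →L[ℝ] H)
    (hPV : ∀ x : H, PV x ∈ V ∧ x - PV x ∈ Vᗮ)
    (hPW : ∀ x : H, PW x ∈ W ∧ x - PW x ∈ Wᗮ)
    (hcpt : IsCompactOperator (PW - PV)) :
    IsFredholmPair V Wᗮ ∧
      FiniteDimensional ℝ ↥(V ⊓ Wᗮ) ∧ FiniteDimensional ℝ ↥(Vᗮ ⊓ W) := by
  have hPV' : (PV : H →ₗ[ℝ] H).IsOrthogonalProjectionOnto V := hPV
  have hPW' : (PW : H →ₗ[ℝ] H).IsOrthogonalProjectionOnto W := hPW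
  set K : H →L[ℝ] H := PW - PV
  have hK : (K : H →ₗ[ℝ] H).IsSymmetric := hPW'.isSymmetric.sub hPV'.isSymmetric
  have hVW : V ⊓ Wᗮ ≤ eigenspace (K : End ℝ H) (-1) := by
    rintro x ⟨hxV, hxW⟩
    simp [K, hPW'.apply_of_mem_orthogonal hxW, hPV'.apply_of_mem hxV]
  have hWV : Vᗮ ⊓ W ≤ eigenspace (K : End ℝ H) 1 := by
    rintro x ⟨hxV, hxW⟩
    simp [K, hPW'.apply_of_mem hxW, hPV'.apply_of_mem_orthogonal hxV]
  have hrange : LinearMap.range ((K - (1 : ℝ) • 1 : H →L[ℝ] H) : H →ₗ[ℝ] H) ≤ V ⊔ Wᗮ := by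
    rintro _ ⟨x, rfl⟩
    have hx : (K - (1 : ℝ) • 1) x = -(PV x + (x - PW x)) := by
      simp only [K, one_smul, sub_apply, one_apply_eq_self]
      abel
    rw [ContinuousLinearMap.coe_coe, hx]
    exact neg_mem (Submodule.add_mem_sup (hPV x).1 (hPW x).2)
  have hle : (eigenspace (K : End ℝ H) 1)ᗮ ≤ V ⊔ Wᗮ :=
    (K.orthogonal_eigenspace_le_range_sub_smul hcpt hK one_ne_zero).trans hrange
  have := K.finite_dimensional_eigenspace hcpt (-1) (by norm_num)
  have := K.finite_dimensional_eigenspace hcpt 1 one_ne_zero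
  have := (eigenspace (K : End ℝ H) 1).finiteDimensional_quotient_orthogonal
  have hfin : FiniteDimensional ℝ ↥(V ⊓ Wᗮ) := Submodule.finiteDimensional_of_le hVW
  refine ⟨⟨hfin, ?_, ?_⟩, hfin, Submodule.finiteDimensional_of_le hWV⟩
  · exact Submodule.isClosed_mono_of_finiteDimensional_quotient
      (Submodule.isClosed_orthogonal _) hle
  · exact Module.Finite.of_surjective _ (Submodule.factor_surjective hle)

/-- If `V, W` are closed subspaces of a Hilbert space `H` and `W` is a compact
perturbation of `V` (the difference `P_W − P_V` of the orthogonal projections is a compact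
operator), then `(V, W^⊥)` is a Fredholm pair; in particular both `V ∩ W^⊥` and `V^⊥ ∩ W`
are finite dimensional, so the relative dimension
`dim(V,W) = dim(V ∩ W^⊥) − dim(V^⊥ ∩ W)` is a well-defined integer. -/
theorem stmt_8 {H : Type*} [NormedAddCommGroup H] [InnerProductSpace ℝ H] [CompleteSpace H]
    (V W : Submodule ℝ H) (hV : IsClosed (V : Set H)) (hW : IsClosed (W : Set H))
    (PV PW : H →L[ℝ] H)
    (hPV : ∀ x : H, PV x ∈ V ∧ x - PV x ∈ Vᗮ)
    (hPW : ∀ x : H, PW x ∈ W ∧ x - PW x ∈ Wᗮ)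
    (hcpt : IsCompactOperator (PW - PV)) :
    IsFredholmPair V Wᗮ ∧
      FiniteDimensional ℝ ↥(V ⊓ Wᗮ) ∧ FiniteDimensional ℝ ↥(Vᗮ ⊓ W) :=
  stmt_8_general V W PV PW hPV hPW hcpt
end
end

section
/- Let B = E(a_1,...,a_n) be the ellipsoid {z in C^n : π sum_j |z_j|^2/a_j ≤ 1}, let H̃(z) = aπ(|z_1|^2/a_1 + ... + |z_n|^2/a_n) − a with a = l·a_p, and let E_κ = E_κ^+ ⊕ E^0 ⊕ E^- ⊂ H^{1/2}(S^1, R^{2n}), where E_κ^+ = {x = sum_{k≥1} e^{2πikt} x_k : x_l ∈ C^p × {0}, x_j = 0 for j > l}. Then for every x ∈ E_κ, the action A_{H̃}(x) = (1/2)(||x^+||^2_{H^{1/2}} − ||x^-||^2_{H^{1/2}}) − ∫_0^1 H̃(x(t)) dt satisfies A_{H̃}(x) ≤ a. -/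
open Real

noncomputable section

/-- Action bound on the subspace `E_κ = E_κ^+ ⊕ E^0 ⊕ E^-` for the quadratic
Hamiltonian `H̃(z) = aπ ∑_j |z_j|²/a_j − a` of the ellipsoid `E(a_1,…,a_n)`, with
`a = l·a_p` and `κ = n(l−1)+p`.  An element `x` of `H^{1/2}(S^1,ℝ^{2n}) = H^{1/2}(S^1,ℂ^n)`
is given by its Fourier coefficients `x_k ∈ ℂ^n`; membership in `E_κ` means `x_l ∈ ℂ^p×{0}`
and `x_k = 0` for `k > l`.  Then
`A_{H̃}(x) = ½(‖x⁺‖²_{H^{1/2}} − ‖x⁻‖²_{H^{1/2}}) − ∫₀¹ H̃(x(t)) dt ≤ a`,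
where by Parseval `∫₀¹ H̃(x(t)) dt = aπ ∑_j (∑_k |x_k^j|²)/a_j − a`. -/
theorem stmt_11 (n l p : ℕ) (hn : 1 ≤ n) (hp1 : 1 ≤ p) (hpn : p ≤ n) (hl : 1 ≤ l)
    (a : Fin n → ℝ) (hpos : ∀ j, 0 < a j) (hmono : StrictMono a)
    (hchain : ∀ m : ℕ, 1 ≤ m → m < l →
      (m : ℝ) * a ⟨n - 1, by omega⟩ < ((m : ℝ) + 1) * a ⟨0, by omega⟩)
    (x : ℤ → EuclideanSpace ℂ (Fin n))
    (hsum : Summable fun k : ℤ => (|k| : ℝ) * ‖x k‖ ^ 2)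
    (hsum2 : Summable fun k : ℤ => ‖x k‖ ^ 2)
    (hEk1 : ∀ i : Fin n, p ≤ (i : ℕ) → x (l : ℤ) i = 0)
    (hEk2 : ∀ k : ℤ, (l : ℤ) < k → x k = 0) :
    π * (∑' k : ℕ, ((k : ℝ) + 1) * ‖x ((k : ℤ) + 1)‖ ^ 2)
      - π * (∑' k : ℕ, ((k : ℝ) + 1) * ‖x (-(k : ℤ) - 1)‖ ^ 2)
      - (((l : ℝ) * a ⟨p - 1, by omega⟩) * π *
          (∑ j : Fin n, (∑' k : ℤ, ‖x k j‖ ^ 2) / a j) - (l : ℝ) * a ⟨p - 1, by omega⟩)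
      ≤ (l : ℝ) * a ⟨p - 1, by omega⟩ := by
  have hπ : (0:ℝ) ≤ π := Real.pi_pos.le
  set A : ℝ := (l : ℝ) * a ⟨p - 1, by omega⟩ with hA
  -- coordinate bound
  have hcoord : ∀ (k : ℤ) (j : Fin n), ‖x k j‖ ^ 2 ≤ ‖x k‖ ^ 2 := by
    intro k j
    have h1 : ‖x k‖ ^ 2 = ∑ i, ‖x k i‖ ^ 2 := by
      rw [EuclideanSpace.norm_eq, Real.sq_sqrt (by positivity)]
    rw [h1]
    exact Finset.single_le_sum (f := fun i => ‖x k i‖ ^ 2) (fun i _ => by positivity)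
      (Finset.mem_univ j)
  have hsumj : ∀ j : Fin n, Summable fun k : ℤ => ‖x k j‖ ^ 2 := fun j =>
    hsum2.of_nonneg_of_le (fun k => by positivity) (fun k => hcoord k j)
  -- finitely supported ℕ-sums
  have hfin : ∀ (j : Fin n) (k : ℕ), l ≤ k →
      ((k : ℝ) + 1) * ‖x ((k : ℤ) + 1) j‖ ^ 2 = 0 := by
    intro j k hk
    rw [hEk2 ((k : ℤ) + 1) (by omega)]
    simp
  have hsumN : ∀ j : Fin n, Summable fun k : ℕ => ((k : ℝ) + 1) * ‖x ((k : ℤ) + 1) j‖ ^ 2 := by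
    intro j
    apply summable_of_ne_finset_zero (s := Finset.range l)
    intro k hk
    simp only [Finset.mem_range, not_lt] at hk
    exact hfin j k hk
  have hsumN2 : ∀ j : Fin n, Summable fun k : ℕ => ‖x ((k : ℤ) + 1) j‖ ^ 2 := by
    intro j
    exact (hsumj j).comp_injective (fun a b h => by omega)
  -- key pointwise inequality
  have hkey : ∀ (j : Fin n) (k : ℕ),
      ((k : ℝ) + 1) * ‖x ((k : ℤ) + 1) j‖ ^ 2 ≤ (A / a j) * ‖x ((k : ℤ) + 1) j‖ ^ 2 := by
    intro j k
    rcases lt_trichotomy (k + 1) l with hkl | hkl | hkl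
    · -- k+1 < l : use chain
      have hc := hchain (k + 1) (by omega) hkl
      have hjn : (j : ℕ) < n := j.2
      have h1 : a j ≤ a ⟨n - 1, by omega⟩ := hmono.monotone (by
        show (j : ℕ) ≤ n - 1
        omega)
      have h2 : a ⟨0, by omega⟩ ≤ a ⟨p - 1, by omega⟩ := hmono.monotone (by
        show 0 ≤ p - 1
        omega)
      have hle : ((k : ℝ) + 1) ≤ A / a j := by
        rw [le_div_iff₀ (hpos j)]
        have c1 : ((k : ℝ) + 1) * a j ≤ ((k : ℝ) + 1) * a ⟨n - 1, by omega⟩ :=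
          mul_le_mul_of_nonneg_left h1 (by positivity)
        have c2 : ((k : ℝ) + 1) * a ⟨n - 1, by omega⟩ < (((k : ℝ) + 1) + 1) * a ⟨0, by omega⟩ := by
          have := hchain (k + 1) (by omega) hkl
          push_cast at this ⊢
          linarith
        have c3 : (((k : ℝ) + 1) + 1) * a ⟨0, by omega⟩ ≤ (l : ℝ) * a ⟨0, by omega⟩ := by
          apply mul_le_mul_of_nonneg_right _ (hpos _).le
          have : (k : ℕ) + 2 ≤ l := by omega
          exact_mod_cast this
        have c4 : (l : ℝ) * a ⟨0, by omega⟩ ≤ A := by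
          rw [hA]
          apply mul_le_mul_of_nonneg_left h2 (by positivity)
        linarith
      exact mul_le_mul_of_nonneg_right hle (by positivity)
    · -- k+1 = l
      by_cases hj : p ≤ (j : ℕ)
      · have : x ((k : ℤ) + 1) j = 0 := by
          have : ((k : ℤ) + 1) = (l : ℤ) := by exact_mod_cast hkl
          rw [this]
          exact hEk1 j hj
        rw [this]
        simp
      · have hj' : (j : ℕ) < p := lt_of_not_ge hj
        have h1 : a j ≤ a ⟨p - 1, by omega⟩ := hmono.monotone (by
          show (j : ℕ) ≤ p - 1
          omega)
        have hle : ((k : ℝ) + 1) ≤ A / a j := by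
          rw [le_div_iff₀ (hpos j), hA]
          have : ((k : ℝ) + 1) = (l : ℝ) := by exact_mod_cast hkl
          rw [this]
          exact mul_le_mul_of_nonneg_left h1 (by positivity)
        exact mul_le_mul_of_nonneg_right hle (by positivity)
    · -- l < k+1 : coefficient vanishes
      rw [hEk2 ((k : ℤ) + 1) (by exact_mod_cast hkl)]
      simp
  -- ℕ-sum ≤ ℤ-sum for squares
  have hNZ : ∀ j : Fin n,
      (∑' k : ℕ, ‖x ((k : ℤ) + 1) j‖ ^ 2) ≤ ∑' k : ℤ, ‖x k j‖ ^ 2 := by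
    intro j
    exact Summable.tsum_le_tsum_of_inj (fun k : ℕ => (k : ℤ) + 1)
      (fun a b h => by simp only [] at h; omega)
      (fun c _ => by positivity) (fun k => le_refl _) (hsumN2 j) (hsumj j)
  -- main bound on the positive part
  have hmain : (∑' k : ℕ, ((k : ℝ) + 1) * ‖x ((k : ℤ) + 1)‖ ^ 2)
      ≤ ∑ j : Fin n, (A / a j) * ∑' k : ℤ, ‖x k j‖ ^ 2 := by
    have hexp : ∀ k : ℕ, ((k : ℝ) + 1) * ‖x ((k : ℤ) + 1)‖ ^ 2
        = ∑ j : Fin n, ((k : ℝ) + 1) * ‖x ((k : ℤ) + 1) j‖ ^ 2 := by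
      intro k
      rw [← Finset.mul_sum, EuclideanSpace.norm_eq, Real.sq_sqrt (by positivity)]
    calc (∑' k : ℕ, ((k : ℝ) + 1) * ‖x ((k : ℤ) + 1)‖ ^ 2)
        = ∑' k : ℕ, ∑ j : Fin n, ((k : ℝ) + 1) * ‖x ((k : ℤ) + 1) j‖ ^ 2 := by
          exact tsum_congr hexp
      _ = ∑ j : Fin n, ∑' k : ℕ, ((k : ℝ) + 1) * ‖x ((k : ℤ) + 1) j‖ ^ 2 :=
          Summable.tsum_finsetSum (fun j _ => hsumN j)
      _ ≤ ∑ j : Fin n, (A / a j) * ∑' k : ℤ, ‖x k j‖ ^ 2 := by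
          apply Finset.sum_le_sum
          intro j _
          calc (∑' k : ℕ, ((k : ℝ) + 1) * ‖x ((k : ℤ) + 1) j‖ ^ 2)
              ≤ ∑' k : ℕ, (A / a j) * ‖x ((k : ℤ) + 1) j‖ ^ 2 :=
                Summable.tsum_le_tsum (hkey j) (hsumN j) ((hsumN2 j).mul_left _)
            _ = (A / a j) * ∑' k : ℕ, ‖x ((k : ℤ) + 1) j‖ ^ 2 := tsum_mul_left
            _ ≤ (A / a j) * ∑' k : ℤ, ‖x k j‖ ^ 2 := by
                apply mul_le_mul_of_nonneg_left (hNZ j)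
                have hApos : 0 < A := by
                  rw [hA]
                  have : (0:ℝ) < (l:ℝ) := by exact_mod_cast hl
                  exact mul_pos this (hpos _)
                exact div_nonneg hApos.le (hpos j).le
  have hneg : 0 ≤ ∑' k : ℕ, ((k : ℝ) + 1) * ‖x (-(k : ℤ) - 1)‖ ^ 2 :=
    tsum_nonneg (fun k => by positivity)
  have hrhs : A * π * (∑ j : Fin n, (∑' k : ℤ, ‖x k j‖ ^ 2) / a j)
      = π * ∑ j : Fin n, (A / a j) * ∑' k : ℤ, ‖x k j‖ ^ 2 := by
    rw [Finset.mul_sum, Finset.mul_sum]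
    congr 1
    ext j
    ring
  have hfin2 := mul_le_mul_of_nonneg_left hmain hπ
  rw [hrhs]
  linarith [mul_nonneg hπ hneg]
end
end

section
/- For v : [0,∞) × S^1 → R^{2n} = C^n of class H^1 vanishing for s large, the identity ||∇v||^2_{L^2} = ||∂̄_{J_0} v||^2_{L^2} + ||P^- v(0,·)||^2_{H^{1/2}(S^1)} − ||P^+ v(0,·)||^2_{H^{1/2}(S^1)} holds, where ∂̄_{J_0} = ∂_s + i∂_t, and P^± are the projections of a loop onto its positive/negative Fourier modes. -/
/-!
Write `c_k(s)` for the Fourier coefficients of the loop `v(s, ·)`. Integrating by parts in the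
periodic variable gives `(∂ₜv)^_k = 2πik c_k`, and differentiating under the integral gives
`(∂ₛv)^_k = c_k'`. Parseval on each circle `{s} × S¹` then turns the `t`-integral of
`|∂ₛv|² + |∂ₜv|² - |∂ₛv + i∂ₜv|²` into `∑_k 2πk (d/ds)|c_k(s)|²`. Integrating in `s` up to a
point beyond the support (the Parseval series dominate, so sum and integral commute) leaves
`-∑_k 2πk |c_k(0)|²`, whose negative and positive modes are the two `H^{1/2}` terms.
Working mode by mode needs only `v ∈ C¹`: the direct argument differentiates `∫⟨v, i∂ₜv⟩ dt`
in `s`, which needs second derivatives.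
-/

open Real Complex MeasureTheory Set

theorem hasDerivAt_intervalIntegral_of_continuous_partial {E : Type*} [NormedAddCommGroup E]
    [NormedSpace ℝ E] [CompleteSpace E] {G G' : ℝ × ℝ → E} (a b : ℝ) (hG : Continuous G)
    (hG' : Continuous G') (hderiv : ∀ s t, HasDerivAt (fun σ => G (σ, t)) (G' (s, t)) s)
    (s₀ : ℝ) :
    HasDerivAt (fun s => ∫ t in a..b, G (s, t)) (∫ t in a..b, G' (s₀, t)) s₀ := by
  obtain ⟨M, hM⟩ := ((isCompact_closedBall s₀ 1).prod isCompact_uIcc).exists_bound_of_continuousOn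
    (hG'.continuousOn (s := Metric.closedBall s₀ 1 ×ˢ uIcc a b))
  have hslice (s : ℝ) : Continuous fun t => G (s, t) := hG.comp (by fun_prop)
  refine (intervalIntegral.hasDerivAt_integral_of_dominated_loc_of_deriv_le
    (bound := fun _ => M) (Metric.ball_mem_nhds s₀ one_pos)
    (.of_forall fun s => (hslice s).aestronglyMeasurable) ((hslice s₀).intervalIntegrable a b)
    (hG'.comp (by fun_prop : Continuous fun t : ℝ => (s₀, t))).aestronglyMeasurable
    (.of_forall fun t ht s hs => hM (s, t) ⟨Metric.ball_subset_closedBall hs, uIoc_subset_uIcc ht⟩)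
    intervalIntegrable_const (.of_forall fun t _ s _ => hderiv s t)).2

theorem continuous_fourier_coe (T : ℝ) (k : ℤ) :
    Continuous fun x : ℝ => fourier k (x : AddCircle T) :=
  (map_continuous _).comp (AddCircle.continuous_mk' T)

section FourierCoeffOn

variable {E : Type*} [NormedAddCommGroup E] [NormedSpace ℂ E] {a b : ℝ}

theorem fourierCoeffOn_deriv_of_eq_endpoints [CompleteSpace E] (hab : a < b) {f f' : ℝ → E}
    (k : ℤ) (hf : ∀ x ∈ uIcc a b, HasDerivAt f (f' x) x)
    (hf' : IntervalIntegrable f' volume a b) (hfab : f a = f b) :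
    fourierCoeffOn hab f' k = (2 * π * I * k / (b - a)) • fourierCoeffOn hab f k := by
  have := Fact.mk (sub_pos.2 hab)
  have hends : ((b : ℝ) : AddCircle (b - a)) = a := by
    simpa using AddCircle.coe_add_period (b - a) a
  rw [fourierCoeffOn_eq_integral, fourierCoeffOn_eq_integral,
    intervalIntegral.integral_smul_deriv_eq_deriv_smul
      (fun x _ => hasDerivAt_fourier_neg (b - a) k x) hf
      ((continuous_const.mul (continuous_fourier_coe _ _)).intervalIntegrable a b) hf',
    hends, hfab, sub_self, zero_sub]
  simp_rw [mul_smul, intervalIntegral.integral_smul]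
  rw [← neg_smul, smul_comm, ← Complex.ofReal_sub]
  congr 2
  ring

theorem fourierCoeffOn_add (hab : a < b) {f g : ℝ → E} (hf : IntervalIntegrable f volume a b)
    (hg : IntervalIntegrable g volume a b) (k : ℤ) :
    fourierCoeffOn hab (fun x => f x + g x) k =
      fourierCoeffOn hab f k + fourierCoeffOn hab g k := by
  have hφ := (continuous_fourier_coe (b - a) (-k)).continuousOn (s := uIcc a b)
  simp_rw [fourierCoeffOn_eq_integral, smul_add]
  rw [intervalIntegral.integral_add (hf.continuousOn_smul hφ) (hg.continuousOn_smul hφ), smul_add]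

theorem ContinuousLinearMap.fourierCoeffOn_comp [CompleteSpace E] {F : Type*}
    [NormedAddCommGroup F] [NormedSpace ℂ F] [CompleteSpace F] (L : E →L[ℂ] F) (hab : a < b)
    {f : ℝ → E} (hf : IntervalIntegrable f volume a b) (k : ℤ) :
    fourierCoeffOn hab (fun x => L (f x)) k = L (fourierCoeffOn hab f k) := by
  have hφ := (continuous_fourier_coe (b - a) (-k)).continuousOn (s := uIcc a b)
  rw [fourierCoeffOn_eq_integral, fourierCoeffOn_eq_integral, map_smul_of_tower,
    ← L.intervalIntegral_comp_comm (hf.continuousOn_smul hφ)]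
  simp_rw [L.map_smul]

theorem hasDerivAt_fourierCoeffOn_of_continuous_partial [CompleteSpace E] (hab : a < b)
    {u u' : ℝ × ℝ → E} (hu : Continuous u) (hu' : Continuous u')
    (hderiv : ∀ s t, HasDerivAt (fun σ => u (σ, t)) (u' (s, t)) s) (k : ℤ) (s : ℝ) :
    HasDerivAt (fun σ => fourierCoeffOn hab (fun t => u (σ, t)) k)
      (fourierCoeffOn hab (fun t => u' (s, t)) k) s := by
  have hφ := continuous_fourier_coe (b - a) (-k)
  simp_rw [fourierCoeffOn_eq_integral]
  exact (hasDerivAt_intervalIntegral_of_continuous_partial a b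
    (G := fun q => fourier (-k) (q.2 : AddCircle (b - a)) • u q)
    (G' := fun q => fourier (-k) (q.2 : AddCircle (b - a)) • u' q) (by fun_prop) (by fun_prop)
    (fun s t => (hderiv s t).const_smul (fourier (-k) (t : AddCircle (b - a)))) s).const_smul _

end FourierCoeffOn

theorem hasSum_sq_fourierCoeffOn_euclidean {ι : Type*} [Fintype ι] {a b : ℝ} (hab : a < b)
    {f : ℝ → EuclideanSpace ℂ ι} (hf : MemLp f 2 (volume.restrict (Ioc a b))) :
    HasSum (fun k => ‖fourierCoeffOn hab f k‖ ^ 2) ((b - a)⁻¹ • ∫ x in a..b, ‖f x‖ ^ 2) := by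
  have hf_int : IntervalIntegrable f volume a b :=
    (intervalIntegrable_iff_integrableOn_Ioc_of_le hab.le).2 (hf.integrable one_le_two)
  have hcomp (j : ι) : MemLp (fun x => f x j) 2 (volume.restrict (Ioc a b)) :=
    (EuclideanSpace.proj (𝕜 := ℂ) j).comp_memLp' hf
  have hsq (j : ι) : IntervalIntegrable (fun x => ‖f x j‖ ^ 2) volume a b :=
    (intervalIntegrable_iff_integrableOn_Ioc_of_le hab.le).2
      ((hcomp j).integrable_norm_pow two_ne_zero)
  simp_rw [EuclideanSpace.norm_sq_eq]
  rw [intervalIntegral.integral_finsetSum fun j _ => hsq j, Finset.smul_sum]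
  convert hasSum_sum fun j _ => hasSum_sq_fourierCoeffOn hab (hcomp j) using 4 with k j
  exact congrArg (‖·‖) ((EuclideanSpace.proj j).fourierCoeffOn_comp hab hf_int k).symm

section UnitInterval

variable {ι : Type*} [Fintype ι] {f g : ℝ → EuclideanSpace ℂ ι}

local notation "𝓕" => fourierCoeffOn (zero_lt_one' ℝ)

theorem fourierCoeffOn_zero_one_eq_integral {E : Type*} [NormedAddCommGroup E] [NormedSpace ℂ E]
    (f : ℝ → E) (k : ℤ) :
    𝓕 f k = ∫ t in (0:ℝ)..1, cexp (-2 * π * I * k * t) • f t := by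
  rw [fourierCoeffOn_eq_integral]
  simp only [sub_zero, div_one, one_smul, fourier_coe_apply, ofReal_one]
  congr! 4
  push_cast
  ring

theorem hasSum_sq_fourierCoeffOn_zero_one (hf : Continuous f) :
    HasSum (fun k => ‖𝓕 f k‖ ^ 2) (∫ t in (0:ℝ)..1, ‖f t‖ ^ 2) := by
  obtain ⟨C, hC⟩ := isCompact_Icc.exists_bound_of_continuousOn (hf.continuousOn (s := Icc 0 1))
  have hL2 : MemLp f 2 (volume.restrict (Ioc 0 1)) :=
    .of_bound hf.aestronglyMeasurable C
      (ae_restrict_of_forall_mem measurableSet_Ioc fun t ht => hC t (Ioc_subset_Icc_self ht))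
  simpa using hasSum_sq_fourierCoeffOn_euclidean (zero_lt_one' ℝ) hL2

theorem hasSum_sq_add_sq_fourierCoeffOn (hf : Continuous f) (hg : Continuous g) :
    HasSum (fun k => ‖𝓕 f k‖ ^ 2 + ‖𝓕 g k‖ ^ 2)
      (∫ t in (0:ℝ)..1, ‖f t‖ ^ 2 + ‖g t‖ ^ 2) := by
  rw [intervalIntegral.integral_add (f := fun t => ‖f t‖ ^ 2) (g := fun t => ‖g t‖ ^ 2)
    ((hf.norm.pow 2).intervalIntegrable 0 1) ((hg.norm.pow 2).intervalIntegrable 0 1)]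
  exact (hasSum_sq_fourierCoeffOn_zero_one hf).add (hasSum_sq_fourierCoeffOn_zero_one hg)

theorem hasSum_sq_fourierCoeffOn_add_I_smul (hf : Continuous f) (hg : Continuous g) :
    HasSum (fun k => ‖𝓕 f k + I • 𝓕 g k‖ ^ 2) (∫ t in (0:ℝ)..1, ‖f t + I • g t‖ ^ 2) := by
  have hlin (k : ℤ) : 𝓕 (fun t => f t + I • g t) k = 𝓕 f k + I • 𝓕 g k := by
    rw [fourierCoeffOn_add (g := fun t => I • g t) _ (hf.intervalIntegrable 0 1)
      ((hg.const_smul I).intervalIntegrable 0 1)]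
    exact congrArg _ (fourierCoeffOn.const_smul g I k _)
  simpa only [hlin] using hasSum_sq_fourierCoeffOn_zero_one (f := fun t => f t + I • g t)
    (hf.add (hg.const_smul I))

end UnitInterval

theorem norm_sq_add_norm_sq_sub_norm_add_I_smul_sq {ι : Type*} [Fintype ι]
    (x c : EuclideanSpace ℂ ι) (r : ℝ) :
    ‖x‖ ^ 2 + ‖(r * I) • c‖ ^ 2 - ‖x + I • (r * I) • c‖ ^ 2 = 2 * r * inner ℝ c x := by
  have hrot : I • (r * I) • c = -(r • c) := by
    rw [smul_smul, ← neg_smul, ← Complex.coe_smul]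
    congr 1
    push_cast
    linear_combination (r : ℂ) * I_sq
  rw [hrot, ← sub_eq_add_neg, norm_sub_sq_real, norm_smul, norm_smul, norm_mul, norm_I,
    Complex.norm_real, real_inner_smul_right, real_inner_comm, Real.norm_eq_abs, mul_one]
  ring

theorem HasSum.eq_sub_of_neg_mul_int {w : ℤ → ℝ} {r σ : ℝ}
    (h : HasSum (fun k : ℤ => -(r * k * w k)) σ) :
    σ = r * ∑' m : ℕ, ((m : ℝ) + 1) * w (-(m : ℤ) - 1) -
      r * ∑' m : ℕ, ((m : ℝ) + 1) * w ((m : ℤ) + 1) := by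
  have hpos : Summable fun m : ℕ => -(r * ((m : ℤ) + 1 : ℤ) * w ((m : ℤ) + 1)) :=
    h.summable.comp_injective (i := fun m : ℕ => (m : ℤ) + 1) fun m n hmn => by
      simp only at hmn; omega
  have hneg : Summable fun m : ℕ => -(r * (-((m : ℤ) + 1) : ℤ) * w (-((m : ℤ) + 1))) :=
    h.summable.comp_injective (i := fun m : ℕ => -((m : ℤ) + 1)) fun m n hmn => by
      simp only at hmn; omega
  rw [h.unique (hpos.hasSum.of_add_one_of_neg_add_one hneg.hasSum), ← tsum_mul_left,
    ← tsum_mul_left, Int.cast_zero, mul_zero, zero_mul, neg_zero, add_zero, sub_eq_add_neg,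
    add_comm, ← tsum_neg]
  congr 1 <;> refine tsum_congr fun m => ?_ <;> push_cast <;> ring_nf

theorem setIntegral_Ioi_eq_intervalIntegral {E : Type*} [NormedAddCommGroup E] [NormedSpace ℝ E]
    {f : ℝ → E} {a S : ℝ} (haS : a ≤ S) (hf : ∀ s, S < s → f s = 0) :
    ∫ s in Ioi a, f s = ∫ s in a..S, f s := by
  rw [intervalIntegral.integral_of_le haS]
  exact setIntegral_eq_of_subset_of_forall_sdiff_eq_zero measurableSet_Ioi Ioc_subset_Ioi_self
    fun s hs => hf s (not_le.1 fun h => hs.2 ⟨hs.1, h⟩)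

section HalfCylinder

variable {E : Type*} [NormedAddCommGroup E] [NormedSpace ℂ E]

noncomputable def partialS (u : ℝ × ℝ → E) (q : ℝ × ℝ) : E := fderiv ℝ u q (1, 0)

noncomputable def partialT (u : ℝ × ℝ → E) (q : ℝ × ℝ) : E := fderiv ℝ u q (0, 1)

noncomputable def loopCoeff (u : ℝ × ℝ → E) (k : ℤ) (s : ℝ) : E :=
  fourierCoeffOn (zero_lt_one' ℝ) (fun t => u (s, t)) k

variable {u : ℝ × ℝ → E}

theorem continuous_partialS (hu : ContDiff ℝ 1 u) : Continuous (partialS u) :=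
  (hu.continuous_fderiv one_ne_zero).clm_apply continuous_const

theorem continuous_partialT (hu : ContDiff ℝ 1 u) : Continuous (partialT u) :=
  (hu.continuous_fderiv one_ne_zero).clm_apply continuous_const

theorem hasDerivAt_partialS (hu : Differentiable ℝ u) (s t : ℝ) :
    HasDerivAt (fun σ => u (σ, t)) (partialS u (s, t)) s :=
  (hu (s, t)).hasFDerivAt.comp_hasDerivAt s ((hasDerivAt_id s).prodMk (hasDerivAt_const s t))

theorem hasDerivAt_partialT (hu : Differentiable ℝ u) (s t : ℝ) :
    HasDerivAt (fun τ => u (s, τ)) (partialT u (s, t)) t :=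
  (hu (s, t)).hasFDerivAt.comp_hasDerivAt t ((hasDerivAt_const t s).prodMk (hasDerivAt_id t))

theorem fderiv_eq_zero_of_forall_le {S : ℝ} (hS : ∀ s t, S ≤ s → u (s, t) = 0) {q : ℝ × ℝ}
    (hq : S < q.1) : fderiv ℝ u q = 0 := by
  have hzero : u =ᶠ[nhds q] fun _ => 0 := by
    filter_upwards [(isOpen_lt continuous_const continuous_fst).mem_nhds hq] with p hp
    exact hS p.1 p.2 hp.le
  rw [hzero.fderiv_eq, fderiv_const_apply]

theorem continuous_loopCoeff (hu : Continuous u) (k : ℤ) : Continuous (loopCoeff u k) := by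
  have hφ := continuous_fourier_coe (1 - 0) (-k)
  unfold loopCoeff
  simp_rw [fourierCoeffOn_eq_integral]
  fun_prop

variable [CompleteSpace E]

theorem hasDerivAt_loopCoeff (hu : ContDiff ℝ 1 u) (k : ℤ) (s : ℝ) :
    HasDerivAt (loopCoeff u k) (loopCoeff (partialS u) k s) s :=
  hasDerivAt_fourierCoeffOn_of_continuous_partial _ hu.continuous (continuous_partialS hu)
    (hasDerivAt_partialS (hu.differentiable one_ne_zero)) k s

theorem loopCoeff_partialT (hu : ContDiff ℝ 1 u) (hper : ∀ s t, u (s, t + 1) = u (s, t))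
    (k : ℤ) (s : ℝ) : loopCoeff (partialT u) k s = (2 * π * I * k) • loopCoeff u k s := by
  have hslice : Continuous fun t => partialT u (s, t) := (continuous_partialT hu).comp (by fun_prop)
  rw [loopCoeff, fourierCoeffOn_deriv_of_eq_endpoints _ k
    (fun t _ => hasDerivAt_partialT (hu.differentiable one_ne_zero) s t)
    (hslice.intervalIntegrable 0 1) (by simpa using (hper s 0).symm)]
  simp [loopCoeff]

end HalfCylinder

section HalfCylinderEuclidean

variable {ι : Type*} [Fintype ι] {u : ℝ × ℝ → EuclideanSpace ℂ ι}

theorem hasDerivAt_mul_norm_sq_loopCoeff (hu : ContDiff ℝ 1 u)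
    (hper : ∀ s t, u (s, t + 1) = u (s, t)) (k : ℤ) (s : ℝ) :
    HasDerivAt (fun σ => 2 * π * k * ‖loopCoeff u k σ‖ ^ 2)
      (‖loopCoeff (partialS u) k s‖ ^ 2 + ‖loopCoeff (partialT u) k s‖ ^ 2 -
        ‖loopCoeff (partialS u) k s + I • loopCoeff (partialT u) k s‖ ^ 2) s := by
  have hmul : (2 * π * I * k : ℂ) = ((2 * π * k : ℝ) : ℂ) * I := by push_cast; ring
  rw [loopCoeff_partialT hu hper, hmul, norm_sq_add_norm_sq_sub_norm_add_I_smul_sq]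
  exact ((hasDerivAt_loopCoeff hu k s).norm_sq.const_mul (2 * π * k)).congr_deriv (by ring)

theorem hasSum_intervalIntegral_energy_sub_dbar (hu : ContDiff ℝ 1 u)
    (hper : ∀ s t, u (s, t + 1) = u (s, t)) {S : ℝ} (hS : ∀ t, u (S, t) = 0) :
    HasSum (fun k : ℤ => -(2 * π * k * ‖loopCoeff u k 0‖ ^ 2))
      (∫ s in (0:ℝ)..S, ((∫ t in (0:ℝ)..1, ‖partialS u (s, t)‖ ^ 2 + ‖partialT u (s, t)‖ ^ 2) -
        ∫ t in (0:ℝ)..1, ‖partialS u (s, t) + I • partialT u (s, t)‖ ^ 2)) := by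
  have hus := continuous_partialS hu
  have hut := continuous_partialT hu
  have hslice {w : ℝ × ℝ → EuclideanSpace ℂ ι} (hw : Continuous w) (s : ℝ) :
      Continuous fun t => w (s, t) := hw.comp (by fun_prop)
  have hP (s : ℝ) := hasSum_sq_add_sq_fourierCoeffOn (hslice hus s) (hslice hut s)
  have hQ (s : ℝ) := hasSum_sq_fourierCoeffOn_add_I_smul (hslice hus s) (hslice hut s)
  have hmode_cont (k : ℤ) : Continuous fun s =>
      ‖loopCoeff (partialS u) k s‖ ^ 2 + ‖loopCoeff (partialT u) k s‖ ^ 2 -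
        ‖loopCoeff (partialS u) k s + I • loopCoeff (partialT u) k s‖ ^ 2 := by
    have := continuous_loopCoeff hus k
    have := continuous_loopCoeff hut k
    fun_prop
  have hbound_cont : Continuous fun s =>
      (∫ t in (0:ℝ)..1, ‖partialS u (s, t)‖ ^ 2 + ‖partialT u (s, t)‖ ^ 2) +
        ∫ t in (0:ℝ)..1, ‖partialS u (s, t) + I • partialT u (s, t)‖ ^ 2 := by
    fun_prop
  have hsum := intervalIntegral.hasSum_integral_of_dominated_convergence (μ := volume) (a := 0)
    (b := S)
    (fun k s => ‖loopCoeff (partialS u) k s‖ ^ 2 + ‖loopCoeff (partialT u) k s‖ ^ 2 +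
        ‖loopCoeff (partialS u) k s + I • loopCoeff (partialT u) k s‖ ^ 2)
    (fun k => (hmode_cont k).aestronglyMeasurable)
    (fun k => .of_forall fun s _ => by
      rw [Real.norm_eq_abs, abs_le]
      constructor <;> nlinarith [sq_nonneg ‖loopCoeff (partialS u) k s‖])
    (.of_forall fun s _ => ((hP s).add (hQ s)).summable)
    ((hbound_cont.congr fun s => ((hP s).add (hQ s)).tsum_eq.symm).intervalIntegrable _ _)
    (.of_forall fun s _ => (hP s).sub (hQ s))
  refine hsum.congr_fun fun k => ?_
  rw [intervalIntegral.integral_eq_sub_of_hasDerivAt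
    (fun s _ => hasDerivAt_mul_norm_sq_loopCoeff hu hper k s)
    ((hmode_cont k).intervalIntegrable _ _)]
  simp [loopCoeff, hS, fourierCoeffOn_eq_integral]

end HalfCylinderEuclidean

/-- For a (`C^1`, 1-periodic in `t`) map `v : [0,∞) × S^1 → ℝ^{2n} = ℂ^n`
vanishing for `s` large, one has the identity
`‖∇v‖²_{L²} = ‖∂̄_{J₀} v‖²_{L²} + ‖P⁻ v(0,·)‖²_{H^{1/2}(S^1)} − ‖P⁺ v(0,·)‖²_{H^{1/2}(S^1)}`,
where `∂̄_{J₀} = ∂_s + i∂_t`, and for a loop `x = ∑_k x_k e^{2πikt}` one has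
`‖P^± x‖²_{H^{1/2}} = 2π ∑_{±k>0} |k| |x_k|²`. -/
theorem stmt_19 (n : ℕ) (v : ℝ × ℝ → EuclideanSpace ℂ (Fin n))
    (hv : ContDiff ℝ 1 v) (hper : ∀ s t : ℝ, v (s, t + 1) = v (s, t))
    (hsupp : ∃ S : ℝ, ∀ s t : ℝ, S ≤ s → v (s, t) = 0) :
    let D1 : (ℝ × ℝ) → EuclideanSpace ℂ (Fin n) := fun q => fderiv ℝ v q (1, 0)
    let D2 : (ℝ × ℝ) → EuclideanSpace ℂ (Fin n) := fun q => fderiv ℝ v q (0, 1)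
    let coef : ℤ → EuclideanSpace ℂ (Fin n) := fun k =>
      ∫ t in (0:ℝ)..1, Complex.exp (-2 * (π : ℂ) * Complex.I * (k : ℂ) * (t : ℂ)) • v (0, t)
    (∫ s in Set.Ioi (0:ℝ), ∫ t in (0:ℝ)..1, (‖D1 (s, t)‖ ^ 2 + ‖D2 (s, t)‖ ^ 2)) =
      (∫ s in Set.Ioi (0:ℝ), ∫ t in (0:ℝ)..1, ‖D1 (s, t) + Complex.I • D2 (s, t)‖ ^ 2) +
        2 * π * (∑' k : ℕ, ((k : ℝ) + 1) * ‖coef (-(k : ℤ) - 1)‖ ^ 2) -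
        2 * π * (∑' k : ℕ, ((k : ℝ) + 1) * ‖coef ((k : ℤ) + 1)‖ ^ 2) := by
  intro D1 D2 coef
  obtain ⟨S₀, hS₀⟩ := hsupp
  set S := max S₀ 0
  have hS (s t : ℝ) (hs : S ≤ s) : v (s, t) = 0 := hS₀ s t ((le_max_left _ _).trans hs)
  have hD (s t : ℝ) (hs : S < s) : D1 (s, t) = 0 ∧ D2 (s, t) = 0 := by
    simp [D1, D2, fderiv_eq_zero_of_forall_le hS (q := (s, t)) hs]
  have hcoef (k : ℤ) : coef k = loopCoeff v k 0 := (fourierCoeffOn_zero_one_eq_integral _ k).symm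
  have hD1 : Continuous D1 := continuous_partialS hv
  have hD2 : Continuous D2 := continuous_partialT hv
  have key : (∫ s in (0:ℝ)..S, ∫ t in (0:ℝ)..1, ‖D1 (s, t)‖ ^ 2 + ‖D2 (s, t)‖ ^ 2) -
      (∫ s in (0:ℝ)..S, ∫ t in (0:ℝ)..1, ‖D1 (s, t) + I • D2 (s, t)‖ ^ 2) =
      2 * π * (∑' k : ℕ, ((k : ℝ) + 1) * ‖coef (-(k : ℤ) - 1)‖ ^ 2) -
        2 * π * (∑' k : ℕ, ((k : ℝ) + 1) * ‖coef ((k : ℤ) + 1)‖ ^ 2) := by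
    rw [← intervalIntegral.integral_sub (Continuous.intervalIntegrable (by fun_prop) _ _)
      (Continuous.intervalIntegrable (by fun_prop) _ _)]
    simp only [hcoef]
    exact (hasSum_intervalIntegral_energy_sub_dbar hv hper
      fun t => hS S t le_rfl).eq_sub_of_neg_mul_int
  rw [setIntegral_Ioi_eq_intervalIntegral (le_max_right S₀ 0) fun s hs => by simp [hD s _ hs],
    setIntegral_Ioi_eq_intervalIntegral (le_max_right S₀ 0) fun s hs => by simp [hD s _ hs]]
  linarith
end
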